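/- arXiv:0903.5375 — 2 statements merged into one kernel-verified Lean document; each statement's English description precedes it below -/
import Mathlib

section
/- The hypersurface associated to the tropicalization of a product of two nonzero Laurent polynomials is the union of the hypersurfaces associated to the tropicalizations of the factors: for nonzero Laurent polynomials f, g in N variables over the valued field K, V(T(fg)) = V(Tf) ∪ V(Tg). -/
open Finset Pointwise

/-- The tropical dot product `α·γ = ∑ i, α i • γ i`. -/
noncomputable def tropDot {Γ : Type*} [AddCommGroup Γ] [LinearOrder Γ] [IsOrderedAddMonoid Γ] {N : ℕ}
    (α : Fin N → ℤ) (γ : Fin N → Γ) : Γ :=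
  ∑ i, α i • γ i

/-- The tropicalization of a Laurent polynomial `f` (an element of the group algebra
`K[ℤ^N]`), evaluated at `γ ∈ Γ^N`:  `Tf(γ) = min_{α ∈ E(f)} (val φ_α + α·γ)`,
computed in `Γ ∪ {∞}` (the min over the empty set is `∞`). -/
noncomputable def tropicalize {Γ : Type*} [AddCommGroup Γ] [LinearOrder Γ] [IsOrderedAddMonoid Γ]
    {K : Type*} [Field K] {N : ℕ} (val : K → WithTop Γ)
    (f : AddMonoidAlgebra K (Fin N → ℤ)) (γ : Fin N → Γ) : WithTop Γ :=
  f.coeff.support.inf fun α => val (f.coeff α) + WithTop.some (tropDot α γ)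

/-- `D_γ(Tf)`: the set of exponents of `f` at which the minimum defining `Tf(γ)`
is attained. -/
def tropD {Γ : Type*} [AddCommGroup Γ] [LinearOrder Γ] [IsOrderedAddMonoid Γ] {K : Type*} [Field K] {N : ℕ}
    (val : K → WithTop Γ) (f : AddMonoidAlgebra K (Fin N → ℤ))
    (γ : Fin N → Γ) : Set (Fin N → ℤ) :=
  {α | α ∈ f.coeff.support ∧ tropicalize val f γ = val (f.coeff α) + WithTop.some (tropDot α γ)}

/-- `V(Tf)`: the hypersurface associated to the tropicalization of `f`,
i.e. the points `γ` where the minimum is attained at least twice. -/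
def tropV {Γ : Type*} [AddCommGroup Γ] [LinearOrder Γ] [IsOrderedAddMonoid Γ] {K : Type*} [Field K] {N : ℕ}
    (val : K → WithTop Γ) (f : AddMonoidAlgebra K (Fin N → ℤ)) :
    Set (Fin N → Γ) :=
  {γ | ∃ α β : Fin N → ℤ, α ≠ β ∧ α ∈ tropD val f γ ∧ β ∈ tropD val f γ}

/-- Evaluation of a Laurent polynomial at a point of the torus `(K∖{0})^N`:
`f(x) = ∑_{α ∈ E(f)} φ_α x^α`. -/
noncomputable def lEval {K : Type*} [Field K] {N : ℕ}
    (f : AddMonoidAlgebra K (Fin N → ℤ)) (x : Fin N → Kˣ) : K :=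
  ∑ α ∈ f.coeff.support, f.coeff α * ((∏ i, (x i) ^ (α i) : Kˣ) : K)

/-! Each coefficient of `fg` is a sum of products `φ_α ψ_β` with `α + β = δ`, and every such
term satisfies `val(φ_α ψ_β) + δ·γ ≥ Tf(γ) + Tg(γ)`, with equality only when `α ∈ D_γ(Tf)` and
`β ∈ D_γ(Tg)`. Hence `D_γ(T(fg)) ⊆ D_γ(Tf) + D_γ(Tg)`, and an exponent that decomposes uniquely as
such a sum carries a single term of minimal value, so it lies in `D_γ(T(fg))`. Since `ℤ^N` admits
a total group order, two finite sets, one of them with at least two elements, always have two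
distinct uniquely decomposable sums (`TwoUniqueSums`); so `D_γ(T(fg))` has two elements exactly when
`D_γ(Tf)` or `D_γ(Tg)` does. -/

namespace AddValuation

variable {R Γ₀ ι : Type*} [Ring R] [LinearOrderedAddCommGroupWithTop Γ₀] (v : AddValuation R Γ₀)
  {s : Finset ι} {F : ι → R} {c e : Γ₀}

open LinearOrderedAddCommGroupWithTop in
theorem le_map_sum_add (he : e ≠ ⊤) (h : ∀ i ∈ s, c ≤ v (F i) + e) :
    c ≤ v (∑ i ∈ s, F i) + e := by
  rw [← neg_add_cancel_right_of_ne_top he c]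
  refine add_le_add_left (v.map_le_sum fun i hi => ?_) e
  rw [← add_le_add_iff_left_of_ne_top he, neg_add_cancel_right_of_ne_top he]
  exact h i hi

open LinearOrderedAddCommGroupWithTop in
theorem lt_map_sum_add (hc : c ≠ ⊤) (he : e ≠ ⊤) (h : ∀ i ∈ s, c < v (F i) + e) :
    c < v (∑ i ∈ s, F i) + e := by
  rw [← neg_add_cancel_right_of_ne_top he c]
  refine (add_lt_add_iff_left_of_ne_top he).mpr
    (v.map_lt_sum (add_ne_top.mpr ⟨hc, neg_eq_top.not.mpr he⟩) fun i hi => ?_)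
  rw [← add_lt_add_iff_left_of_ne_top he, neg_add_cancel_right_of_ne_top he]
  exact h i hi

theorem map_sum_eq_of_lt [DecidableEq ι] {j : ι} (hj : j ∈ s)
    (hF : ∀ i ∈ s \ {j}, v (F j) < v (F i)) : v (∑ i ∈ s, F i) = v (F j) :=
  Valuation.map_sum_eq_of_lt v hj hF

end AddValuation

section Tropical

variable {Γ K : Type*} [AddCommGroup Γ] [LinearOrder Γ] [IsOrderedAddMonoid Γ] [Field K] {N : ℕ}

theorem tropDot_add (α β : Fin N → ℤ) (γ : Fin N → Γ) :
    tropDot (α + β) γ = tropDot α γ + tropDot β γ := by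
  simp only [tropDot, Pi.add_apply, add_smul, sum_add_distrib]

noncomputable def tropTerm (val : K → WithTop Γ) (f : AddMonoidAlgebra K (Fin N → ℤ))
    (γ : Fin N → Γ) (α : Fin N → ℤ) : WithTop Γ :=
  val (f.coeff α) + tropDot α γ

noncomputable def tropDFinset (val : K → WithTop Γ) (f : AddMonoidAlgebra K (Fin N → ℤ))
    (γ : Fin N → Γ) : Finset (Fin N → ℤ) :=
  {α ∈ f.coeff.support | tropicalize val f γ = tropTerm val f γ α}

theorem coe_tropDFinset (val : K → WithTop Γ) (f : AddMonoidAlgebra K (Fin N → ℤ))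
    (γ : Fin N → Γ) : (tropDFinset val f γ : Set (Fin N → ℤ)) = tropD val f γ := by
  rw [tropDFinset, coe_filter]
  rfl

theorem mem_tropV_iff_one_lt_card (val : K → WithTop Γ) (f : AddMonoidAlgebra K (Fin N → ℤ))
    (γ : Fin N → Γ) : γ ∈ tropV val f ↔ 1 < #(tropDFinset val f γ) := by
  simp only [tropV, one_lt_card_iff, ← coe_tropDFinset, mem_coe]
  exact exists₂_congr fun _ _ => and_rotate

theorem tropDFinset_nonempty (val : K → WithTop Γ) {f : AddMonoidAlgebra K (Fin N → ℤ)}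
    (hf : f ≠ 0) (γ : Fin N → Γ) : (tropDFinset val f γ).Nonempty := by
  obtain ⟨α, hα, h⟩ := exists_mem_eq_inf f.coeff.support
    (Finsupp.support_nonempty_iff.mpr (AddMonoidAlgebra.coeff_eq_zero.not.mpr hf))
    (tropTerm val f γ)
  exact ⟨α, mem_filter.mpr ⟨hα, h⟩⟩

variable (v : AddValuation K (WithTop Γ)) {f g : AddMonoidAlgebra K (Fin N → ℤ)}
  (γ : Fin N → Γ)

theorem tropTerm_eq_top_iff {α : Fin N → ℤ} : tropTerm v f γ α = ⊤ ↔ α ∉ f.coeff.support := by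
  simp [tropTerm]

theorem tropicalize_le_tropTerm (α : Fin N → ℤ) : tropicalize v f γ ≤ tropTerm v f γ α := by
  by_cases hα : α ∈ f.coeff.support
  · exact inf_le hα
  · exact ((tropTerm_eq_top_iff v γ).mpr hα).symm ▸ le_top

theorem tropicalize_ne_top (hf : f ≠ 0) : tropicalize v f γ ≠ ⊤ := by
  obtain ⟨α, hα⟩ := tropDFinset_nonempty v hf γ
  rw [(mem_filter.mp hα).2, Ne, tropTerm_eq_top_iff, not_not]
  exact (mem_filter.mp hα).1

theorem mem_tropDFinset_iff (hf : f ≠ 0) {α : Fin N → ℤ} :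
    α ∈ tropDFinset v f γ ↔ tropicalize v f γ = tropTerm v f γ α := by
  refine ⟨fun h => (mem_filter.mp h).2, fun h => mem_filter.mpr ⟨?_, h⟩⟩
  rw [← not_not (a := α ∈ _), ← tropTerm_eq_top_iff v γ, ← h]
  exact tropicalize_ne_top v γ hf

theorem tropTerm_mul (δ : Fin N → ℤ) :
    tropTerm v (f * g) γ δ
      = v (∑ α ∈ f.coeff.support, f.coeff α * g.coeff (-α + δ)) + tropDot δ γ := by
  rw [tropTerm, AddMonoidAlgebra.coeff_mul_apply_left, Finsupp.sum]

theorem map_mul_coeff_add_tropDot (α δ : Fin N → ℤ) :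
    v (f.coeff α * g.coeff (-α + δ)) + tropDot δ γ
      = tropTerm v f γ α + tropTerm v g γ (-α + δ) := by
  obtain ⟨β, rfl⟩ : ∃ β, δ = α + β := ⟨-α + δ, (add_neg_cancel_left α δ).symm⟩
  rw [neg_add_cancel_left, v.map_mul, tropDot_add, WithTop.coe_add, tropTerm, tropTerm,
    add_add_add_comm]

theorem tropicalize_add_le_tropTerm_mul (δ : Fin N → ℤ) :
    tropicalize v f γ + tropicalize v g γ ≤ tropTerm v (f * g) γ δ := by
  rw [tropTerm_mul]
  refine v.le_map_sum_add WithTop.coe_ne_top fun α _ => ?_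
  rw [map_mul_coeff_add_tropDot]
  exact add_le_add (tropicalize_le_tropTerm v γ _) (tropicalize_le_tropTerm v γ _)

theorem tropicalize_add_lt_tropTerm_add (hf : f ≠ 0) (hg : g ≠ 0) {α β : Fin N → ℤ}
    (h : ¬(α ∈ tropDFinset v f γ ∧ β ∈ tropDFinset v g γ)) :
    tropicalize v f γ + tropicalize v g γ < tropTerm v f γ α + tropTerm v g γ β := by
  rw [mem_tropDFinset_iff v γ hf, mem_tropDFinset_iff v γ hg, not_and_or] at h
  have hfα := tropicalize_le_tropTerm v (f := f) γ α
  have hgβ := tropicalize_le_tropTerm v (f := g) γ β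
  rcases h with h | h
  · exact WithTop.add_lt_add_of_lt_of_le (tropicalize_ne_top v γ hg) (hfα.lt_of_ne h) hgβ
  · exact WithTop.add_lt_add_of_le_of_lt (tropicalize_ne_top v γ hf) hfα (hgβ.lt_of_ne h)

theorem tropicalize_add_lt_tropTerm_mul (hf : f ≠ 0) (hg : g ≠ 0) {δ : Fin N → ℤ}
    (hδ : δ ∉ tropDFinset v f γ + tropDFinset v g γ) :
    tropicalize v f γ + tropicalize v g γ < tropTerm v (f * g) γ δ := by
  rw [tropTerm_mul]
  refine v.lt_map_sum_add (WithTop.add_ne_top.mpr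
    ⟨tropicalize_ne_top v γ hf, tropicalize_ne_top v γ hg⟩) WithTop.coe_ne_top fun α _ => ?_
  rw [map_mul_coeff_add_tropDot]
  refine tropicalize_add_lt_tropTerm_add v γ hf hg fun ⟨hα, hβ⟩ => hδ ?_
  simpa only [add_neg_cancel_left] using add_mem_add hα hβ

theorem tropTerm_mul_of_uniqueAdd (hf : f ≠ 0) (hg : g ≠ 0) {α β : Fin N → ℤ}
    (hα : α ∈ tropDFinset v f γ) (hβ : β ∈ tropDFinset v g γ)
    (h : UniqueAdd (tropDFinset v f γ) (tropDFinset v g γ) α β) :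
    tropTerm v (f * g) γ (α + β) = tropicalize v f γ + tropicalize v g γ := by
  have hαβ : tropTerm v f γ α + tropTerm v g γ β = tropicalize v f γ + tropicalize v g γ := by
    rw [← (mem_tropDFinset_iff v γ hf).mp hα, ← (mem_tropDFinset_iff v γ hg).mp hβ]
  rw [tropTerm_mul, v.map_sum_eq_of_lt (mem_filter.mp hα).1, map_mul_coeff_add_tropDot,
    neg_add_cancel_left, hαβ]
  intro α' hα'
  have hne : α' ≠ α := fun h => (mem_sdiff.mp hα').2 (mem_singleton.mpr h)
  rw [← WithTop.add_lt_add_iff_right (WithTop.coe_ne_top (a := tropDot (α + β) γ)),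
    map_mul_coeff_add_tropDot, map_mul_coeff_add_tropDot, neg_add_cancel_left, hαβ]
  exact tropicalize_add_lt_tropTerm_add v γ hf hg fun ⟨h₁, h₂⟩ =>
    hne (h h₁ h₂ (add_neg_cancel_left α' _)).1

theorem tropicalize_mul (hf : f ≠ 0) (hg : g ≠ 0) :
    tropicalize v (f * g) γ = tropicalize v f γ + tropicalize v g γ := by
  obtain ⟨α, hα, β, hβ, h⟩ := UniqueSums.uniqueAdd_of_nonempty
    (tropDFinset_nonempty v hf γ) (tropDFinset_nonempty v hg γ)
  refine le_antisymm ?_ (Finset.le_inf fun δ _ => tropicalize_add_le_tropTerm_mul v γ δ)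
  exact (tropicalize_le_tropTerm v γ (α + β)).trans_eq
    (tropTerm_mul_of_uniqueAdd v γ hf hg hα hβ h)

theorem tropDFinset_mul_subset (hf : f ≠ 0) (hg : g ≠ 0) :
    tropDFinset v (f * g) γ ⊆ tropDFinset v f γ + tropDFinset v g γ := by
  intro δ hδ
  by_contra hδ'
  have hlt := tropicalize_add_lt_tropTerm_mul v γ hf hg hδ'
  rw [← (mem_tropDFinset_iff v γ (mul_ne_zero hf hg)).mp hδ, tropicalize_mul v γ hf hg] at hlt
  exact hlt.false

theorem add_mem_tropDFinset_mul (hf : f ≠ 0) (hg : g ≠ 0) {α β : Fin N → ℤ}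
    (hα : α ∈ tropDFinset v f γ) (hβ : β ∈ tropDFinset v g γ)
    (h : UniqueAdd (tropDFinset v f γ) (tropDFinset v g γ) α β) :
    α + β ∈ tropDFinset v (f * g) γ := by
  rw [mem_tropDFinset_iff v γ (mul_ne_zero hf hg), tropicalize_mul v γ hf hg,
    tropTerm_mul_of_uniqueAdd v γ hf hg hα hβ h]

theorem one_lt_card_tropDFinset_mul_iff (hf : f ≠ 0) (hg : g ≠ 0) :
    1 < #(tropDFinset v (f * g) γ) ↔ 1 < #(tropDFinset v f γ) * #(tropDFinset v g γ) := by
  refine ⟨fun h => h.trans_le ((card_le_card (tropDFinset_mul_subset v γ hf hg)).trans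
    card_add_le), fun h => ?_⟩
  obtain ⟨p, hp, q, hq, hpq, hpu, hqu⟩ := TwoUniqueSums.uniqueAdd_of_one_lt_card h
  rw [mem_product] at hp hq
  refine one_lt_card.mpr ⟨_, add_mem_tropDFinset_mul v γ hf hg hp.1 hp.2 hpu,
    _, add_mem_tropDFinset_mul v γ hf hg hq.1 hq.2 hqu, fun hsum => hpq ?_⟩
  obtain ⟨h₁, h₂⟩ := hpu hq.1 hq.2 hsum.symm
  exact Prod.ext h₁.symm h₂.symm

end Tropical

/-- The hypersurface associated to the tropicalization of a product is the union of
those of the factors: `V(T(fg)) = V(Tf) ∪ V(Tg)`. -/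
theorem tropV_mul {Γ : Type*} [AddCommGroup Γ] [LinearOrder Γ] [IsOrderedAddMonoid Γ]
    {K : Type*} [Field K] {N : ℕ}
    (val : K → WithTop Γ)
    (hval0 : ∀ x : K, val x = ⊤ ↔ x = 0)
    (hvalmul : ∀ x y : K, val (x * y) = val x + val y)
    (hvaladd : ∀ x y : K, min (val x) (val y) ≤ val (x + y))
    (f g : AddMonoidAlgebra K (Fin N → ℤ)) (hf : f ≠ 0) (hg : g ≠ 0) :
    tropV val (f * g) = tropV val f ∪ tropV val g := by
  have hval1 : val 1 = 0 := by
    have h1 : val 1 ≠ ⊤ := (hval0 1).not.mpr one_ne_zero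
    rw [← add_right_inj_of_ne_top h1, ← hvalmul, mul_one, add_zero]
  let v : AddValuation K (WithTop Γ) := .of val ((hval0 0).mpr rfl) hval1 hvaladd hvalmul
  change tropV v (f * g) = tropV v f ∪ tropV v g
  ext γ
  rw [Set.mem_union, mem_tropV_iff_one_lt_card, mem_tropV_iff_one_lt_card,
    mem_tropV_iff_one_lt_card, one_lt_card_tropDFinset_mul_iff v γ hf hg, Nat.one_lt_mul_iff]
  have hfγ := (tropDFinset_nonempty v hf γ).card_pos
  have hgγ := (tropDFinset_nonempty v hg γ).card_pos
  tauto
end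

section
/- Let K be an algebraically closed field equipped with a surjective Krull valuation val : K → Γ ∪ {∞}, and let f_1, …, f_k be finitely many nonzero Laurent polynomials in N variables over K. Then for every γ ∈ Γ^N there exists x ∈ (K∖{0})^N such that (val(x_1),…,val(x_N)) = γ and val(f_i(x)) = Tf_i(γ) for all i ∈ {1,…,k}; that is, the valuation of f_i at x equals the value of the tropicalization of f_i at γ. -/
open Finset Pointwise

/-!
Pick units `tⱼ` with `val tⱼ = γⱼ` and an integer vector `c` such that the exponents of all
the `fᵢ` have pairwise distinct pairings `α ⬝ᵥ c`. Along the curve `x = t · w ^ c` each `fᵢ`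
becomes a one-variable Laurent polynomial in `w` with coefficients `φ_α t^α` of valuation
`val φ_α + α·γ`, so it suffices to find one `w` of valuation `0` at which finitely many
one-variable polynomials take the minimal valuation of their coefficients. Factoring them over
the algebraically closed `K`, this holds as soon as `val (w - r) = min 0 (val r)` for every
root `r`. A root `w` of `X · ∏ (X - r) - 1`, the product running over the roots with
`val r ≥ 0`, has this property, since `w · ∏ (w - r) = 1` forces all these factors to have
valuation `0`.
-/

open Polynomial

theorem Finset.prod_zpow_eq_zpow_sum {ι G : Type*} [CommGroup G] (s : Finset ι) (f : ι → ℤ)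
    (a : G) :
    ∏ i ∈ s, a ^ f i = a ^ ∑ i ∈ s, f i := by
  induction s using Finset.cons_induction <;> simp [*, zpow_add]

theorem prod_mul_zpow_zpow {ι G : Type*} [Fintype ι] [CommGroup G] (t : ι → G) (w : G)
    (c α : ι → ℤ) :
    ∏ j, (t j * w ^ c j) ^ α j = (∏ j, t j ^ α j) * w ^ (α ⬝ᵥ c) := by
  simp only [mul_zpow, prod_mul_distrib, ← zpow_mul, dotProduct, ← prod_zpow_eq_zpow_sum,
    mul_comm]

theorem Polynomial.inf_support_coeff_sum_monomial {R α ι : Type*} [Semiring R]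
    [SemilatticeInf α] [OrderTop α] {g : R → α} (hg : g 0 = ⊤) {s : Finset ι} {e : ι → ℕ}
    (he : Set.InjOn e s) (a : ι → R) :
    (∑ i ∈ s, monomial (e i) (a i)).support.inf
        (fun d => g ((∑ i ∈ s, monomial (e i) (a i)).coeff d)) = s.inf fun i => g (a i) := by
  classical
  set q := ∑ i ∈ s, monomial (e i) (a i)
  have hcoeff (d : ℕ) : q.coeff d = ∑ i ∈ s, if e i = d then a i else 0 := by
    simp [q, coeff_monomial]
  have hcoeff_e (i) (hi : i ∈ s) : q.coeff (e i) = a i := by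
    rw [hcoeff, sum_eq_single_of_mem i hi fun j hj hji => if_neg fun h => hji (he hj hi h),
      if_pos rfl]
  refine le_antisymm (Finset.le_inf fun i hi => ?_) (Finset.le_inf fun d hd => ?_)
  · by_cases ha : a i = 0
    · simp [ha, hg]
    · rw [← hcoeff_e i hi]
      exact inf_le (mem_support_iff.2 (by rwa [hcoeff_e i hi]))
  · obtain ⟨i, hi, rfl⟩ : ∃ i ∈ s, e i = d := by
      by_contra! h
      exact mem_support_iff.1 hd ((hcoeff d).trans (sum_eq_zero fun i hi => if_neg (h i hi)))
    rw [hcoeff_e i hi]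
    exact inf_le hi

theorem exists_injOn_dotProduct {ι R : Type*} [Fintype ι] [CommRing R] [IsDomain R]
    [Infinite R] (E : Finset (ι → R)) : ∃ c : ι → R, Set.InjOn (· ⬝ᵥ c) E := by
  classical
  let L : (ι → R) → MvPolynomial ι R := fun δ => ∑ j, MvPolynomial.C (δ j) * MvPolynomial.X j
  have eval_L (δ c : ι → R) : MvPolynomial.eval c (L δ) = δ ⬝ᵥ c := by
    simp [L, dotProduct]
  have L_ne_zero (δ : ι → R) (hδ : δ ≠ 0) : L δ ≠ 0 := by
    intro hL
    refine hδ (funext fun j => ?_)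
    simpa [eval_L] using congrArg (MvPolynomial.eval (Pi.single j 1)) hL
  let P := ∏ p ∈ (E ×ˢ E).filter (fun p => p.1 ≠ p.2), L (p.1 - p.2)
  have hP : P ≠ 0 :=
    prod_ne_zero_iff.2 fun p hp => L_ne_zero _ (sub_ne_zero.2 (mem_filter.1 hp).2)
  obtain ⟨c, hc⟩ : ∃ c, MvPolynomial.eval c P ≠ 0 := by
    by_contra! h
    exact hP (MvPolynomial.funext fun c => by simpa using h c)
  refine ⟨c, fun α hα β hβ hαβ => by_contra fun hne => hc ?_⟩
  rw [map_prod]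
  refine prod_eq_zero (i := (α, β)) (mem_filter.2 ⟨mem_product.2 ⟨hα, hβ⟩, hne⟩) ?_
  simp only [eval_L, sub_dotProduct]
  exact sub_eq_zero.2 hαβ

namespace AddValuation

variable {K Γ : Type*} [Field K] [AddCommGroup Γ] [LinearOrder Γ] [IsOrderedAddMonoid Γ]
  (v : AddValuation K (WithTop Γ))

theorem map_multiset_prod (s : Multiset K) : v s.prod = (s.map v).sum := by
  induction s using Multiset.induction with
  | empty => simp
  | cons a s ih => simp [v.map_mul, ih]

theorem map_finset_prod {ι : Type*} (s : Finset ι) (f : ι → K) :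
    v (∏ i ∈ s, f i) = ∑ i ∈ s, v (f i) := by
  rw [Finset.prod_eq_multiset_prod, v.map_multiset_prod, Multiset.map_map]
  rfl

theorem le_map_multiset_sum {s : Multiset K} {g : WithTop Γ} (h : ∀ x ∈ s, g ≤ v x) :
    g ≤ v s.sum := by
  induction s using Multiset.induction with
  | empty => simp
  | cons a s ih =>
    rw [Multiset.sum_cons]
    exact v.map_le_add (h a (by simp)) (ih fun x hx => h x (by simp [hx]))

theorem map_units_zpow {u : Kˣ} {g : Γ} (hu : v u = g) (n : ℤ) : v ↑(u ^ n) = ↑(n • g) := by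
  cases n with
  | ofNat n => simp [v.map_pow, hu]
  | negSucc n =>
    simp [zpow_negSucc, v.map_inv, v.map_pow, hu, negSucc_zsmul]

theorem map_prod_units_zpow {ι : Type*} [Fintype ι] {t : ι → Kˣ} {γ : ι → Γ}
    (ht : ∀ j, v (t j) = γ j) (α : ι → ℤ) : v ↑(∏ j, t j ^ α j) = ↑(∑ j, α j • γ j) := by
  rw [Units.coe_prod, v.map_finset_prod, WithTop.coe_sum]
  exact sum_congr rfl fun j _ => v.map_units_zpow (ht j) (α j)

theorem sum_min_zero_le_map_esymm (s : Multiset K) (j : ℕ) :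
    (s.map fun r => min 0 (v r)).sum ≤ v (s.esymm j) := by
  refine v.le_map_multiset_sum fun x hx => ?_
  obtain ⟨t, ht, rfl⟩ := Multiset.mem_map.1 hx
  obtain ⟨u, rfl⟩ := Multiset.le_iff_exists_add.1 (Multiset.mem_powersetCard.1 ht).1
  have hu : (u.map fun r => min 0 (v r)).sum ≤ 0 := by
    simpa using
      Multiset.sum_map_le_sum_map _ (fun _ => (0 : WithTop Γ)) fun r _ => min_le_left _ _
  calc ((t + u).map fun r => min 0 (v r)).sum
      ≤ (t.map fun r => min 0 (v r)).sum := by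
        rw [Multiset.map_add, Multiset.sum_add]
        exact add_le_of_nonpos_right hu
    _ ≤ (t.map v).sum := Multiset.sum_map_le_sum_map _ _ fun r _ => min_le_right _ _
    _ = v t.prod := (v.map_multiset_prod t).symm

theorem map_eval_eq_inf_coeff_of_splits {q : K[X]} (hq : q.Splits) {w : K} (hw : v w = 0)
    (hroots : ∀ r ∈ q.roots, v (w - r) = min 0 (v r)) :
    v (q.eval w) = q.support.inf fun d => v (q.coeff d) := by
  have heval : v (q.eval w) = v q.leadingCoeff + (q.roots.map fun r => min 0 (v r)).sum := by
    rw [hq.eval_eq_prod_roots, v.map_mul, v.map_multiset_prod, Multiset.map_map]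
    exact congrArg _ (congrArg _ (Multiset.map_congr rfl hroots))
  refine le_antisymm (Finset.le_inf fun d hd => ?_) ?_
  · rw [coeff_eq_esymm_roots_of_splits hq (le_natDegree_of_mem_supp d hd), v.map_mul, v.map_mul,
      v.map_pow, v.map_neg, v.map_one, nsmul_zero, add_zero, heval]
    exact add_le_add_right (v.sum_min_zero_le_map_esymm _ _) _
  · rw [eval_eq_sum, Polynomial.sum_def]
    refine v.map_le_sum fun d hd => ?_
    rw [v.map_mul, v.map_pow, hw, nsmul_zero, add_zero]
    exact inf_le hd

theorem exists_map_eq_zero_forall_map_sub_eq_min [IsAlgClosed K] (s : Finset K) :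
    ∃ w, v w = 0 ∧ ∀ r ∈ s, v (w - r) = min 0 (v r) := by
  classical
  set sp := s.filter (0 ≤ v ·)
  obtain ⟨w, hw⟩ : ∃ w, w * ∏ r ∈ sp, (w - r) = 1 := by
    have hmonic : (∏ r ∈ sp, (X - C r)).Monic :=
      monic_prod_of_monic _ _ fun r _ => monic_X_sub_C r
    have hdeg : (X * ∏ r ∈ sp, (X - C r) - C 1).degree ≠ 0 := by
      refine ne_of_gt (natDegree_pos_iff_degree_pos.1 ?_)
      rw [natDegree_sub_C, monic_X.natDegree_mul hmonic, natDegree_X]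
      omega
    obtain ⟨w, hw⟩ := IsAlgClosed.exists_root _ hdeg
    exact ⟨w, by simpa [sub_eq_zero, eval_prod] using hw⟩
  have hsum : v w + ∑ r ∈ sp, v (w - r) = 0 := by
    simpa [v.map_mul, v.map_finset_prod] using congrArg v hw
  have hw_nonneg : 0 ≤ v w := by
    by_contra! hneg
    have hterm (r) (hr : r ∈ sp) : v (w - r) = v w :=
      v.map_sub_eq_of_lt_left (hneg.trans_le (mem_filter.1 hr).2)
    have : v w + ∑ r ∈ sp, v (w - r) ≤ v w :=
      add_le_of_nonpos_right (sum_nonpos fun r hr => (hterm r hr).trans_le hneg.le)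
    exact hneg.not_ge (hsum ▸ this)
  have hterm (r) (hr : r ∈ sp) : 0 ≤ v (w - r) :=
    (le_min hw_nonneg (mem_filter.1 hr).2).trans (v.map_sub _ _)
  obtain ⟨hw0, hsp⟩ := (add_eq_zero_iff_of_nonneg hw_nonneg (sum_nonneg hterm)).1 hsum
  rw [sum_eq_zero_iff_of_nonneg hterm] at hsp
  refine ⟨w, hw0, fun r hr => ?_⟩
  rcases le_or_gt 0 (v r) with hr0 | hr0
  · rw [hsp r (mem_filter.2 ⟨hr, hr0⟩), min_eq_left hr0]
  · rw [v.map_sub_eq_of_lt_right (hw0 ▸ hr0), min_eq_right hr0.le]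

theorem exists_map_eq_zero_forall_map_eval_eq_inf_coeff [IsAlgClosed K] {κ : Type*}
    [Fintype κ] (q : κ → K[X]) :
    ∃ w, v w = 0 ∧ ∀ k, v ((q k).eval w) = (q k).support.inf fun d => v ((q k).coeff d) := by
  classical
  obtain ⟨w, hw, hroots⟩ :=
    v.exists_map_eq_zero_forall_map_sub_eq_min (univ.biUnion fun k => (q k).roots.toFinset)
  exact ⟨w, hw, fun k => v.map_eval_eq_inf_coeff_of_splits (IsAlgClosed.splits _) hw
    fun r hr => hroots r (mem_biUnion.2 ⟨k, mem_univ _, Multiset.mem_toFinset.2 hr⟩)⟩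

theorem exists_map_eq_zero_forall_map_sum_zpow_eq_inf [IsAlgClosed K] {ι κ : Type*}
    [Fintype κ] (s : κ → Finset ι) (a : κ → ι → K) (n : ι → ℤ) (hn : ∀ k, Set.InjOn n (s k)) :
    ∃ w : Kˣ, v w = 0 ∧
      ∀ k, v (∑ i ∈ s k, a k i * ↑(w ^ n i)) = (s k).inf fun i => v (a k i) := by
  classical
  obtain ⟨m, hm⟩ : ∃ m : ℕ, ∀ k, ∀ i ∈ s k, 0 ≤ n i + m := by
    refine ⟨(univ.biUnion s).sup fun i => (n i).natAbs, fun k i hi => ?_⟩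
    have := le_sup (f := fun i => (n i).natAbs) (mem_biUnion.2 ⟨k, mem_univ _, hi⟩)
    omega
  let e : ι → ℕ := fun i => (n i + m).toNat
  have he (k) : Set.InjOn e (s k) := fun i hi j hj hij => hn k hi hj (by
    have := hm k i hi; have := hm k j hj; simp only [e] at hij; omega)
  obtain ⟨w, hw, hq⟩ :=
    v.exists_map_eq_zero_forall_map_eval_eq_inf_coeff fun k => ∑ i ∈ s k, monomial (e i) (a k i)
  have hw0 : w ≠ 0 := v.ne_top_iff.1 (hw ▸ WithTop.zero_ne_top)
  set u := Units.mk0 w hw0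
  refine ⟨u, hw, fun k => ?_⟩
  have hshift : ∑ i ∈ s k, a k i * ↑(u ^ n i)
      = (∑ i ∈ s k, monomial (e i) (a k i)).eval w * ↑(u ^ (-m : ℤ)) := by
    rw [eval_finsetSum, sum_mul]
    refine sum_congr rfl fun i hi => ?_
    have : n i = (e i : ℤ) + -m := by have := hm k i hi; simp only [e]; omega
    rw [this, zpow_add, zpow_natCast, eval_monomial, Units.val_mul, Units.val_pow_eq_pow_val,
      Units.val_mk0, mul_assoc]
  rw [hshift, v.map_mul, hq k, v.map_units_zpow hw,
    inf_support_coeff_sum_monomial v.map_zero (he k)]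
  simp

end AddValuation

theorem exists_point_val_eval_eq_tropicalize_general {Γ : Type*} [AddCommGroup Γ] [LinearOrder Γ] [IsOrderedAddMonoid Γ]
    {K : Type*} [Field K] [IsAlgClosed K] {N k : ℕ}
    (val : K → WithTop Γ)
    (hval0 : ∀ x : K, val x = ⊤ ↔ x = 0)
    (hvalmul : ∀ x y : K, val (x * y) = val x + val y)
    (hvaladd : ∀ x y : K, min (val x) (val y) ≤ val (x + y))
    (hvalsurj : ∀ g : Γ, ∃ a : K, val a = WithTop.some g)
    (f : Fin k → AddMonoidAlgebra K (Fin N → ℤ))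
    (γ : Fin N → Γ) :
    ∃ x : Fin N → Kˣ, (∀ j, val (x j : K) = WithTop.some (γ j)) ∧
      ∀ i, val (lEval (f i) x) = tropicalize val (f i) γ := by
  have hval1 : val 1 = 0 := by
    have h := hvalmul 1 1
    rw [one_mul] at h
    lift val 1 to Γ using mt (hval0 1).1 one_ne_zero with g
    exact_mod_cast left_eq_add.1 (by exact_mod_cast h)
  let v := AddValuation.of val ((hval0 0).2 rfl) hval1 hvaladd hvalmul
  have ht (j : Fin N) : ∃ u : Kˣ, v u = γ j := by
    obtain ⟨a, ha⟩ := hvalsurj (γ j)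
    exact ⟨Units.mk0 a fun h => WithTop.coe_ne_top (ha.symm.trans ((hval0 a).2 h)), ha⟩
  choose t ht using ht
  obtain ⟨c, hc⟩ := exists_injOn_dotProduct (univ.biUnion fun i => (f i).coeff.support)
  obtain ⟨w, hw, hsum⟩ := v.exists_map_eq_zero_forall_map_sum_zpow_eq_inf
    (fun i => (f i).coeff.support) (fun i α => (f i).coeff α * ↑(∏ j, t j ^ α j)) (· ⬝ᵥ c)
    fun i => hc.mono fun α hα => mem_biUnion.2 ⟨i, mem_univ i, hα⟩
  refine ⟨fun j => t j * w ^ c j, fun j => ?_, fun i => ?_⟩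
  · change v _ = _
    rw [Units.val_mul, v.map_mul, ht, v.map_units_zpow hw]
    simp
  · have heval : lEval (f i) (fun j => t j * w ^ c j) = ∑ α ∈ (f i).coeff.support,
        (f i).coeff α * ↑(∏ j, t j ^ α j) * ↑(w ^ (α ⬝ᵥ c)) := by
      simp only [lEval, prod_mul_zpow_zpow, Units.val_mul, mul_assoc]
    rw [heval]
    exact (hsum i).trans
      (inf_congr rfl fun α _ => by rw [v.map_mul, v.map_prod_units_zpow ht]; rfl)

/-- For every value `γ ∈ Γ^N` there is a point `x` of the torus with `val x = γ` at
which the valuation commutes with evaluation for each of finitely many nonzero Laurent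
polynomials:  `val (fᵢ(x)) = Tfᵢ(γ)`. -/
theorem exists_point_val_eval_eq_tropicalize {Γ : Type*} [AddCommGroup Γ] [LinearOrder Γ] [IsOrderedAddMonoid Γ]
    {K : Type*} [Field K] [IsAlgClosed K] {N k : ℕ}
    (val : K → WithTop Γ)
    (hval0 : ∀ x : K, val x = ⊤ ↔ x = 0)
    (hvalmul : ∀ x y : K, val (x * y) = val x + val y)
    (hvaladd : ∀ x y : K, min (val x) (val y) ≤ val (x + y))
    (hvalsurj : ∀ g : Γ, ∃ a : K, val a = WithTop.some g)
    (f : Fin k → AddMonoidAlgebra K (Fin N → ℤ)) (hf : ∀ i, f i ≠ 0)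
    (γ : Fin N → Γ) :
    ∃ x : Fin N → Kˣ, (∀ j, val (x j : K) = WithTop.some (γ j)) ∧
      ∀ i, val (lEval (f i) x) = tropicalize val (f i) γ :=
  exists_point_val_eval_eq_tropicalize_general val hval0 hvalmul hvaladd hvalsurj f γ
end
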